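/- arXiv:2409.12604 — 2 statements merged into one kernel-verified Lean document; each statement's English description precedes it below -/
import Mathlib

section
/- Let H be a symmetric n×n real matrix with an eigenvector v ≠ 0 of eigenvalue λ < 0 (i.e., H.mulVec v = λ • v). Then the set of initial conditions x₀ ∈ ℝⁿ for which the linearized gradient-flow solution t ↦ (exp(-t • H)).mulVec x₀ converges to 0 as t → ∞ is contained in the hyperplane {x : ⟨x, v⟩ = 0}, and hence has Lebesgue measure zero. -/
/-!
If `Hᵀ v = λ v`, then `⟪exp (-t H) x, v⟫ = exp (-t λ) ⟪x, v⟫`. For `λ ≤ 0` the factor `exp (-t λ)`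
is at least `1` once `t ≥ 0`, so a flow line tending to `0` must start in the orthogonal
complement of `v`. For `v ≠ 0` that is a proper subspace, hence Lebesgue-null.
-/

open Filter Matrix MeasureTheory Topology

namespace Matrix

variable {m : Type*} [Fintype m] [DecidableEq m]

section Exp

-- `NormedSpace.exp` does not depend on a norm; one is only needed to sum its power series.
attribute [local instance] Matrix.linftyOpNormedRing Matrix.linftyOpNormedAlgebra

theorem exp_mulVec_of_mulVec_eq_smul {𝕂 : Type*} [RCLike 𝕂] {A : Matrix m m 𝕂} {v : m → 𝕂}
    {μ : 𝕂} (h : A *ᵥ v = μ • v) : NormedSpace.exp A *ᵥ v = NormedSpace.exp μ • v := by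
  have hpow (k : ℕ) : (A ^ k) *ᵥ v = μ ^ k • v := by
    induction k with
    | zero => simp
    | succ k ih => rw [pow_succ', ← mulVec_mulVec, ih, mulVec_smul, h, smul_smul, ← pow_succ]
  have hA := (NormedSpace.exp_series_hasSum_exp' (𝕂 := 𝕂) A).mapL
    (LinearMap.toContinuousLinearMap ((mulVecBilin 𝕂 𝕂).flip v))
  have hμ := (NormedSpace.exp_series_hasSum_exp' (𝕂 := 𝕂) μ).smul_const v
  simp only [LinearMap.coe_toContinuousLinearMap', LinearMap.flip_apply, mulVecBilin_apply,
    smul_mulVec, hpow, smul_smul] at hA hμ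
  exact hA.unique hμ

end Exp

theorem exp_mulVec_dotProduct_of_transpose_mulVec_eq_smul {𝕂 : Type*} [RCLike 𝕂]
    {A : Matrix m m 𝕂} {v : m → 𝕂} {μ : 𝕂} (h : Aᵀ *ᵥ v = μ • v) (x : m → 𝕂) :
    (NormedSpace.exp A *ᵥ x) ⬝ᵥ v = NormedSpace.exp μ * (x ⬝ᵥ v) := by
  rw [dotProduct_comm, dotProduct_mulVec, ← mulVec_transpose, ← exp_transpose,
    exp_mulVec_of_mulVec_eq_smul h, smul_dotProduct, smul_eq_mul, dotProduct_comm]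

theorem dotProduct_eq_zero_of_tendsto_exp_neg_smul_mulVec {H : Matrix m m ℝ} {v x : m → ℝ}
    {μ : ℝ} (hμ : μ ≤ 0) (hv : Hᵀ *ᵥ v = μ • v)
    (hx : Tendsto (fun t : ℝ => NormedSpace.exp ((-t) • H) *ᵥ x) atTop (𝓝 0)) :
    x ⬝ᵥ v = 0 := by
  have hflow (t : ℝ) :
      (NormedSpace.exp ((-t) • H) *ᵥ x) ⬝ᵥ v = Real.exp (-t * μ) * (x ⬝ᵥ v) := by
    rw [Real.exp_eq_exp_ℝ]
    refine exp_mulVec_dotProduct_of_transpose_mulVec_eq_smul ?_ x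
    rw [transpose_smul, smul_mulVec, hv, smul_smul]
  have hdot : Tendsto (fun t : ℝ => Real.exp (-t * μ) * (x ⬝ᵥ v)) atTop (𝓝 0) := by
    have hcont : Continuous fun y : m → ℝ => y ⬝ᵥ v := continuous_id.dotProduct continuous_const
    simpa only [Function.comp_def, hflow, zero_dotProduct] using (hcont.tendsto 0).comp hx
  have hbound : ∀ᶠ t : ℝ in atTop, |x ⬝ᵥ v| ≤ |Real.exp (-t * μ) * (x ⬝ᵥ v)| := by
    filter_upwards [eventually_ge_atTop 0] with t ht
    rw [abs_mul, Real.abs_exp]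
    exact le_mul_of_one_le_left (abs_nonneg _) (Real.one_le_exp (by nlinarith))
  simpa using ge_of_tendsto hdot.abs hbound

end Matrix

theorem MeasureTheory.Measure.addHaar_setOf_dotProduct_eq_zero {ι : Type*} [Fintype ι]
    (μ : Measure (ι → ℝ)) [μ.IsAddHaarMeasure] {v : ι → ℝ} (hv : v ≠ 0) :
    μ {x | x ⬝ᵥ v = 0} = 0 := by
  refine Measure.addHaar_submodule μ (LinearMap.ker ((dotProductBilin ℝ ℝ).flip v)) fun htop ↦ hv ?_
  have hvv : v ⬝ᵥ v = 0 := LinearMap.mem_ker.mp (htop ▸ Submodule.mem_top)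
  exact dotProduct_self_eq_zero.mp hvv

/-- **Gradient flow avoids strict saddles except on a measure-zero set.**
If `H` is a symmetric real matrix with eigenvector `v ≠ 0` of eigenvalue
`lam < 0`, then the set of initial conditions `x₀` for which the linearized
gradient-flow solution `t ↦ exp (-t • H) *ᵥ x₀` converges to `0` is contained
in the hyperplane `{x | x ⬝ᵥ v = 0}` and has Lebesgue measure zero. -/
theorem gradient_flow_converging_set_measure_zero
    {n : ℕ} (H : Matrix (Fin n) (Fin n) ℝ) (hH : H.IsSymm)
    (v : Fin n → ℝ) (hv : v ≠ 0) (lam : ℝ) (hlam : lam < 0)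
    (hev : H.mulVec v = lam • v) :
    {x₀ : Fin n → ℝ |
        Tendsto (fun t : ℝ => (NormedSpace.exp ((-t) • H)).mulVec x₀) atTop (nhds 0)}
      ⊆ {x : Fin n → ℝ | x ⬝ᵥ v = 0} ∧
    volume {x₀ : Fin n → ℝ |
        Tendsto (fun t : ℝ => (NormedSpace.exp ((-t) • H)).mulVec x₀) atTop (nhds 0)} = 0 := by
  have hsub : {x₀ : Fin n → ℝ |
        Tendsto (fun t : ℝ => (NormedSpace.exp ((-t) • H)).mulVec x₀) atTop (nhds 0)}
      ⊆ {x : Fin n → ℝ | x ⬝ᵥ v = 0} := fun _ hx₀ ↦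
    dotProduct_eq_zero_of_tendsto_exp_neg_smul_mulVec hlam.le (by rwa [hH.eq]) hx₀
  exact ⟨hsub, measure_mono_null hsub (Measure.addHaar_setOf_dotProduct_eq_zero volume hv)⟩
end

section
/- Let E be a finite-dimensional real inner product space, f : E → ℝ differentiable with L-Lipschitz gradient (L > 0), and P : E →L[ℝ] E an orthogonal projection. Suppose ρ > 0, 0 < η ≤ 1/L, and at the point x the projection preserves gradient mass: ‖P(∇f x)‖² ≥ ρ * ‖∇f x‖². Then the update x⁺ = x - η • P(∇f x) satisfies f(x⁺) - f(x) ≤ -(ρ * η / 2) * ‖∇f x‖². -/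
/-!
Along the segment `t ↦ x + t • v`, the slope of `f` exceeds its initial slope `⟪∇f x, v⟫` by at
most `L t ‖v‖²`, which integrates to the quadratic upper bound
`f (x + v) ≤ f x + ⟪∇f x, v⟫ + L/2 ‖v‖²`. For an orthogonal projection `P` one has
`⟪g, P g⟫ = ‖P g‖²`, so the projected step `x - η • P g` with `g = ∇f x` decreases `f` by at least
`η (1 - L η / 2) ‖P g‖² ≥ (η / 2) ‖P g‖² ≥ (ρ η / 2) ‖g‖²`.
-/

open scoped RealInnerProductSpace

section LipschitzGradient

variable {E : Type*} [NormedAddCommGroup E] [InnerProductSpace ℝ E] [CompleteSpace E]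
  {f : E → ℝ} {L : ℝ}

theorem hasDerivAt_apply_add_smul (hf : Differentiable ℝ f) (x v : E) (t : ℝ) :
    HasDerivAt (fun s : ℝ => f (x + s • v)) ⟪gradient f (x + t • v), v⟫ t := by
  have hline : HasDerivAt (fun s : ℝ => x + s • v) v t := by
    simpa using ((hasDerivAt_id t).smul_const v).const_add x
  simpa [Function.comp_def] using
    (hf (x + t • v)).hasGradientAt.hasFDerivAt.comp_hasDerivAt t hline

theorem inner_gradient_add_smul_sub_le
    (hlip : ∀ x y : E, ‖gradient f x - gradient f y‖ ≤ L * ‖x - y‖) (x v : E) {t : ℝ}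
    (ht : 0 ≤ t) :
    ⟪gradient f (x + t • v), v⟫ - ⟪gradient f x, v⟫ ≤ L * t * ‖v‖ ^ 2 := by
  have hdist : ‖gradient f (x + t • v) - gradient f x‖ ≤ L * t * ‖v‖ := by
    simpa [norm_smul, abs_of_nonneg ht, mul_assoc] using hlip (x + t • v) x
  calc ⟪gradient f (x + t • v), v⟫ - ⟪gradient f x, v⟫
      = ⟪gradient f (x + t • v) - gradient f x, v⟫ := (inner_sub_left _ _ _).symm
    _ ≤ ‖gradient f (x + t • v) - gradient f x‖ * ‖v‖ := real_inner_le_norm _ _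
    _ ≤ L * t * ‖v‖ * ‖v‖ := by gcongr
    _ = L * t * ‖v‖ ^ 2 := by ring

theorem apply_add_le_of_lipschitz_gradient (hf : Differentiable ℝ f)
    (hlip : ∀ x y : E, ‖gradient f x - gradient f y‖ ≤ L * ‖x - y‖) (x v : E) :
    f (x + v) ≤ f x + ⟪gradient f x, v⟫ + L / 2 * ‖v‖ ^ 2 := by
  set g : ℝ → ℝ := fun t => f (x + t • v) - t * ⟪gradient f x, v⟫ - L * t ^ 2 / 2 * ‖v‖ ^ 2
  have hg : ∀ t, HasDerivAt g
      (⟪gradient f (x + t • v), v⟫ - ⟪gradient f x, v⟫ - L * t * ‖v‖ ^ 2) t := by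
    intro t
    have hquad := (((hasDerivAt_pow 2 t).const_mul L).div_const 2).mul_const (‖v‖ ^ 2)
    refine (((hasDerivAt_apply_add_smul hf x v t).sub
      ((hasDerivAt_id t).mul_const ⟪gradient f x, v⟫)).sub hquad).congr_deriv ?_
    simp only [Nat.cast_ofNat, Nat.add_one_sub_one, pow_one, one_mul]
    ring
  have hanti : AntitoneOn g (Set.Ici 0) := by
    refine antitoneOn_of_hasDerivWithinAt_nonpos (convex_Ici 0)
      (fun t _ => (hg t).continuousAt.continuousWithinAt) (fun t _ => (hg t).hasDerivWithinAt)
      fun t ht => ?_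
    rw [interior_Ici] at ht
    linarith [inner_gradient_add_smul_sub_le hlip x v (le_of_lt ht)]
  have h01 : g 1 ≤ g 0 := hanti Set.self_mem_Ici (Set.mem_Ici.mpr zero_le_one) zero_le_one
  simp only [g, one_smul, zero_smul, add_zero, one_pow, one_mul, mul_one] at h01
  linarith

theorem apply_sub_smul_le_of_inner_gradient_eq (hf : Differentiable ℝ f)
    (hlip : ∀ x y : E, ‖gradient f x - gradient f y‖ ≤ L * ‖x - y‖) (x d : E)
    (hd : ⟪gradient f x, d⟫ = ‖d‖ ^ 2) (η : ℝ) :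
    f (x - η • d) ≤ f x - η * (1 - L * η / 2) * ‖d‖ ^ 2 := by
  have hdescent := apply_add_le_of_lipschitz_gradient hf hlip x (-(η • d))
  rw [← sub_eq_add_neg, inner_neg_right, real_inner_smul_right, hd, norm_neg, norm_smul,
    Real.norm_eq_abs, mul_pow, sq_abs] at hdescent
  linarith

end LipschitzGradient

theorem inner_apply_self_eq_norm_sq {E : Type*} [NormedAddCommGroup E] [InnerProductSpace ℝ E]
    {P : E → E} (hidem : ∀ x, P (P x) = P x) (hsymm : ∀ x y, ⟪P x, y⟫ = ⟪x, P y⟫) (x : E) :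
    ⟪x, P x⟫ = ‖P x‖ ^ 2 := by
  rw [← real_inner_self_eq_norm_sq, hsymm, hidem]

theorem subspace_descent_step_guarantee_general
    {E : Type*} [NormedAddCommGroup E] [InnerProductSpace ℝ E] [FiniteDimensional ℝ E]
    (f : E → ℝ) (hf : Differentiable ℝ f)
    (L : ℝ) (hL : 0 < L)
    (hlip : ∀ x y : E, ‖gradient f x - gradient f y‖ ≤ L * ‖x - y‖)
    (Pr : E →L[ℝ] E)
    (hPidem : ∀ x : E, Pr (Pr x) = Pr x)
    (hPsa : ∀ x y : E, ⟪Pr x, y⟫ = ⟪x, Pr y⟫)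
    (ρ η : ℝ) (hη : 0 < η) (hηL : η ≤ 1 / L)
    (x : E)
    (hmass : ‖Pr (gradient f x)‖ ^ 2 ≥ ρ * ‖gradient f x‖ ^ 2) :
    f (x - η • Pr (gradient f x)) - f x ≤ -(ρ * η / 2) * ‖gradient f x‖ ^ 2 := by
  set g := gradient f x
  have hstep := apply_sub_smul_le_of_inner_gradient_eq hf hlip x (Pr g)
    (inner_apply_self_eq_norm_sq hPidem hPsa g) η
  have hLη : L * η ≤ 1 := by rwa [le_div_iff₀ hL, mul_comm] at hηL
  calc f (x - η • Pr g) - f x ≤ -(η * (1 - L * η / 2)) * ‖Pr g‖ ^ 2 := by linarith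
    _ ≤ -(η / 2) * ‖Pr g‖ ^ 2 := by gcongr; nlinarith
    _ ≤ -(ρ * η / 2) * ‖g‖ ^ 2 := by nlinarith

/-- **Per-step guarantee of curvature-aware subspace descent.**
If `f` has an `L`-Lipschitz gradient, `P` is an orthogonal projection,
`0 < η ≤ 1/L`, and the projection preserves gradient mass at `x`
(`‖P (∇f x)‖² ≥ ρ ‖∇f x‖²` with `ρ > 0`), then the update
`x⁺ = x - η • P (∇f x)` decreases `f` by at least `(ρ η / 2) ‖∇f x‖²`. -/
theorem subspace_descent_step_guarantee
    {E : Type*} [NormedAddCommGroup E] [InnerProductSpace ℝ E] [FiniteDimensional ℝ E]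
    (f : E → ℝ) (hf : Differentiable ℝ f)
    (L : ℝ) (hL : 0 < L)
    (hlip : ∀ x y : E, ‖gradient f x - gradient f y‖ ≤ L * ‖x - y‖)
    (Pr : E →L[ℝ] E)
    (hPidem : ∀ x : E, Pr (Pr x) = Pr x)
    (hPsa : ∀ x y : E, ⟪Pr x, y⟫ = ⟪x, Pr y⟫)
    (ρ η : ℝ) (hρ : 0 < ρ) (hη : 0 < η) (hηL : η ≤ 1 / L)
    (x : E)
    (hmass : ‖Pr (gradient f x)‖ ^ 2 ≥ ρ * ‖gradient f x‖ ^ 2) :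
    f (x - η • Pr (gradient f x)) - f x ≤ -(ρ * η / 2) * ‖gradient f x‖ ^ 2 :=
  subspace_descent_step_guarantee_general f hf L hL hlip Pr hPidem hPsa ρ η hη hηL x hmass
end
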